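/- For every p with 1 < p ≤ 2 there exists a constant C(p) > 0 such that for all real numbers a, b₁, b₂ with 0 ≤ a ≤ 1 one has | |a + b₁|^p − |a + b₂|^p − p a^{p−1}(b₁ − b₂) | ≤ C(p)(|b₁|^{p−1} + |b₂|^{p−1}) |b₁ − b₂|; and for every p > 2 there exists C(p) > 0 such that for all real a, b₁, b₂ with 0 ≤ a ≤ 1 one has | |a + b₁|^p − |a + b₂|^p − p a^{p−1}(b₁ − b₂) | ≤ C(p)(|b₁| + |b₂| + |b₁|^{p−1} + |b₂|^{p−1}) |b₁ − b₂|. -/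

import Mathlib

/-!
Write `φ(y) = sign y · |y|^(p-1)`. The function `G(x) = |a + x|^p - p a^(p-1) x` has derivative
`p (φ(a + x) - a^(p-1))`, so by the mean value theorem it suffices to bound
`|φ(a + x) - a^(p-1)|` for `x` between `b₁` and `b₂`. For `p ≤ 2` the exponent `q = p - 1` is at
most `1` and `φ` is `q`-Hölder, which gives `2 |x|^q`. For `p > 2`, `φ` is Lipschitz on `[-R, R]`
with constant `q R^(q-1)`; since `a ≤ 1`, `R = 2 max 1 |x|` works, giving a multiple of
`|x| + |x|^q`.
-/

open Real Set

noncomputable def signedRpow (q x : ℝ) : ℝ := Real.sign x * |x| ^ q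

section SignedRpow

variable {q x : ℝ}

lemma signedRpow_of_nonneg (hq : q ≠ 0) (hx : 0 ≤ x) : signedRpow q x = x ^ q := by
  rcases hx.eq_or_lt with rfl | hx
  · simp [signedRpow, zero_rpow hq]
  · rw [signedRpow, sign_of_pos hx, abs_of_pos hx, one_mul]

lemma signedRpow_of_neg (hx : x < 0) : signedRpow q x = -(-x) ^ q := by
  rw [signedRpow, sign_of_neg hx, abs_of_neg hx, neg_one_mul]

lemma abs_signedRpow_le (q x : ℝ) : |signedRpow q x| ≤ |x| ^ q := by
  rcases sign_apply_eq x with h | h | h <;>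
    simp [signedRpow, h, abs_of_nonneg (by positivity : 0 ≤ |x| ^ q)]
  positivity

lemma hasDerivAt_abs_rpow_signedRpow {p : ℝ} (hp : 1 < p) (x : ℝ) :
    HasDerivAt (fun y => |y| ^ p) (p * signedRpow (p - 1) x) x := by
  convert hasDerivAt_abs_rpow x hp using 1
  rcases lt_trichotomy x 0 with hx | rfl | hx
  · rw [signedRpow_of_neg hx, abs_of_neg hx, show p - 1 = p - 2 + 1 by ring,
      rpow_add_one (by linarith)]
    ring
  · simp [signedRpow]
  · rw [signedRpow_of_nonneg (by linarith) hx.le, abs_of_pos hx,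
      show p - 1 = p - 2 + 1 by ring, rpow_add_one hx.ne']
    ring

lemma continuousAt_signedRpow_zero (hq : 0 < q) : ContinuousAt (signedRpow q) 0 := by
  have h : Filter.Tendsto (fun y : ℝ => |y| ^ q) (nhds 0) (nhds 0) := by
    simpa [zero_rpow hq.ne'] using (continuous_abs.rpow_const fun _ => Or.inr hq.le).tendsto 0
  simpa [ContinuousAt, signedRpow] using squeeze_zero_norm (abs_signedRpow_le q) h

lemma hasDerivAt_signedRpow (hq : 1 < q) (x : ℝ) :
    HasDerivAt (signedRpow q) (q * |x| ^ (q - 1)) x := by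
  refine hasDerivAt_of_hasDerivAt_of_ne' (g := fun y => q * |y| ^ (q - 1)) (fun y hy => ?_)
    (continuousAt_signedRpow_zero (by linarith)) (by fun_prop (discharger := right; linarith)) x
  rcases hy.lt_or_gt with hy | hy
  · have h : HasDerivAt (fun z => -(-z) ^ q) (q * (-y) ^ (q - 1)) y :=
      (((hasDerivAt_rpow_const (Or.inl (neg_ne_zero.2 hy.ne))).comp y
        (hasDerivAt_neg y)).neg).congr_deriv (by ring)
    rw [abs_of_neg hy]
    exact h.congr_of_eventuallyEq <| (eventually_lt_nhds hy).mono fun z hz => signedRpow_of_neg hz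
  · rw [abs_of_pos hy]
    exact (hasDerivAt_rpow_const (Or.inl hy.ne')).congr_of_eventuallyEq <|
      (eventually_gt_nhds hy).mono fun z hz => signedRpow_of_nonneg (by linarith) hz.le

end SignedRpow

lemma abs_le_max_abs_abs_of_mem_uIcc {a b x : ℝ} (hx : x ∈ uIcc a b) : |x| ≤ max |a| |b| := by
  rcases mem_uIcc.1 hx with ⟨h₁, h₂⟩ | ⟨h₁, h₂⟩
  · exact abs_le_max_abs_abs h₁ h₂
  · exact (abs_le_max_abs_abs h₁ h₂).trans_eq (max_comm _ _)

lemma rpow_max_le_add {s t r : ℝ} (hs : 0 ≤ s) (ht : 0 ≤ t) (hr : 0 ≤ r) :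
    max s t ^ r ≤ s ^ r + t ^ r := by
  rw [rpow_max hs ht hr]
  exact max_le_add_of_nonneg (by positivity) (by positivity)

lemma abs_rpow_le_of_mem_uIcc {a b x r : ℝ} (hr : 0 ≤ r) (hx : x ∈ uIcc a b) :
    |x| ^ r ≤ |a| ^ r + |b| ^ r :=
  (rpow_le_rpow (abs_nonneg x) (abs_le_max_abs_abs_of_mem_uIcc hx) hr).trans
    (rpow_max_le_add (abs_nonneg a) (abs_nonneg b) hr)

lemma abs_rpow_sub_rpow_le {u v q : ℝ} (hu : 0 ≤ u) (hv : 0 ≤ v) (hq₀ : 0 ≤ q) (hq₁ : q ≤ 1) :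
    |u ^ q - v ^ q| ≤ |u - v| ^ q := by
  wlog h : v ≤ u generalizing u v
  · rw [abs_sub_comm, abs_sub_comm u]
    exact this hv hu (le_of_not_ge h)
  have hmono : v ^ q ≤ u ^ q := rpow_le_rpow hv h hq₀
  have hsub : u ^ q ≤ (u - v) ^ q + v ^ q := by
    simpa using rpow_add_le_add_rpow (sub_nonneg.2 h) hv hq₀ hq₁
  rw [abs_of_nonneg (sub_nonneg.2 hmono), abs_of_nonneg (sub_nonneg.2 h)]
  linarith

lemma abs_signedRpow_add_sub_rpow_le_of_le_one {q a : ℝ} (hq₀ : 0 < q) (hq₁ : q ≤ 1)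
    (ha : 0 ≤ a) (x : ℝ) : |signedRpow q (a + x) - a ^ q| ≤ 2 * |x| ^ q := by
  have hx : 0 ≤ |x| ^ q := by positivity
  rcases le_or_gt 0 (a + x) with h | h
  · rw [signedRpow_of_nonneg hq₀.ne' h]
    have := abs_rpow_sub_rpow_le h ha hq₀.le hq₁
    rw [add_sub_cancel_left] at this
    linarith
  · have h₁ : (-(a + x)) ^ q ≤ |x| ^ q :=
      rpow_le_rpow (by linarith) (by rw [abs_of_neg (by linarith)]; linarith) hq₀.le
    have h₂ : a ^ q ≤ |x| ^ q :=
      rpow_le_rpow ha (by rw [abs_of_neg (by linarith)]; linarith) hq₀.le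
    have h₃ : 0 ≤ (-(a + x)) ^ q := rpow_nonneg (by linarith) q
    have h₄ : 0 ≤ a ^ q := rpow_nonneg ha q
    rw [signedRpow_of_neg h, abs_le]
    constructor <;> linarith

lemma abs_signedRpow_sub_le {q u v R : ℝ} (hq : 1 < q) (hu : |u| ≤ R) (hv : |v| ≤ R) :
    |signedRpow q u - signedRpow q v| ≤ q * R ^ (q - 1) * |u - v| := by
  refine Convex.norm_image_sub_le_of_norm_hasDerivWithin_le
    (fun ξ _ => (hasDerivAt_signedRpow hq ξ).hasDerivWithinAt) (fun ξ hξ => ?_)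
    (convex_uIcc v u) left_mem_uIcc right_mem_uIcc
  have hξ : |ξ| ≤ R := (abs_le_max_abs_abs_of_mem_uIcc hξ).trans (max_le hv hu)
  rw [norm_mul, norm_eq_abs, norm_eq_abs, abs_of_pos (by linarith),
    abs_of_nonneg (by positivity)]
  gcongr

lemma abs_signedRpow_add_sub_rpow_le_of_one_lt {q a : ℝ} (hq : 1 < q) (ha₀ : 0 ≤ a)
    (ha₁ : a ≤ 1) (x : ℝ) :
    |signedRpow q (a + x) - a ^ q| ≤ q * 2 ^ (q - 1) * (|x| + |x| ^ q) := by
  set M := max 1 |x|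
  have hM₀ : 0 ≤ M := zero_le_one.trans (le_max_left _ _)
  have h := abs_signedRpow_sub_le hq (u := a + x) (v := a) (R := 2 * M)
    (by linarith [abs_add_le a x, abs_of_nonneg ha₀, le_max_left 1 |x|, le_max_right 1 |x|])
    (by linarith [abs_of_nonneg ha₀, le_max_left 1 |x|])
  rw [signedRpow_of_nonneg (by linarith) ha₀, add_sub_cancel_left,
    mul_rpow zero_le_two hM₀] at h
  have hMx : M ^ (q - 1) * |x| ≤ |x| + |x| ^ q :=
    calc M ^ (q - 1) * |x| ≤ (1 + |x| ^ (q - 1)) * |x| := by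
          gcongr
          simpa using rpow_max_le_add zero_le_one (abs_nonneg x) (by linarith : 0 ≤ q - 1)
      _ = |x| + |x| ^ q := by
          rw [add_mul, one_mul, ← rpow_add_one' (abs_nonneg x) (by linarith), sub_add_cancel]
  calc _ ≤ q * (2 ^ (q - 1) * M ^ (q - 1)) * |x| := h
    _ = q * 2 ^ (q - 1) * (M ^ (q - 1) * |x|) := by ring
    _ ≤ q * 2 ^ (q - 1) * (|x| + |x| ^ q) := by gcongr

lemma abs_abs_add_rpow_sub_sub_le {p a b₁ b₂ K : ℝ} (hp : 1 < p)
    (hK : ∀ x ∈ uIcc b₁ b₂, |signedRpow (p - 1) (a + x) - a ^ (p - 1)| ≤ K) :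
    |(|a + b₁| ^ p - |a + b₂| ^ p - p * a ^ (p - 1) * (b₁ - b₂))| ≤ p * K * |b₁ - b₂| := by
  have hG : ∀ x, HasDerivAt (fun y => |a + y| ^ p - p * a ^ (p - 1) * y)
      (p * (signedRpow (p - 1) (a + x) - a ^ (p - 1))) x := fun x =>
    (((hasDerivAt_abs_rpow_signedRpow hp (a + x)).comp x ((hasDerivAt_id x).const_add a)).sub
      ((hasDerivAt_id x).const_mul _)).congr_deriv (by ring)
  have := Convex.norm_image_sub_le_of_norm_hasDerivWithin_le (C := p * K)
    (fun x _ => (hG x).hasDerivWithinAt) (fun x hx => ?_) (convex_uIcc b₁ b₂)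
    right_mem_uIcc left_mem_uIcc
  · rw [norm_eq_abs, norm_eq_abs] at this
    convert this using 2
    ring
  · rw [norm_mul, norm_eq_abs, norm_eq_abs, abs_of_pos (by linarith)]
    exact mul_le_mul_of_nonneg_left (hK x hx) (by linarith)

/-- Elementary power inequalities: for `1 < p ≤ 2` there is `C(p) > 0` with
`| |a+b₁|^p − |a+b₂|^p − p a^{p−1}(b₁−b₂) | ≤ C(p)(|b₁|^{p−1}+|b₂|^{p−1})|b₁−b₂|`
for all `0 ≤ a ≤ 1`, `b₁, b₂ ∈ ℝ`; and for `p > 2` there is `C(p) > 0` with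
`| |a+b₁|^p − |a+b₂|^p − p a^{p−1}(b₁−b₂) | ≤ C(p)(|b₁|+|b₂|+|b₁|^{p−1}+|b₂|^{p−1})|b₁−b₂|`. -/
theorem stmt_18 :
    (∀ p : ℝ, 1 < p → p ≤ 2 → ∃ C : ℝ, 0 < C ∧ ∀ a b₁ b₂ : ℝ, 0 ≤ a → a ≤ 1 →
      |(|a + b₁| ^ p - |a + b₂| ^ p - p * a ^ (p - 1) * (b₁ - b₂))| ≤
        C * (|b₁| ^ (p - 1) + |b₂| ^ (p - 1)) * |b₁ - b₂|) ∧
    (∀ p : ℝ, 2 < p → ∃ C : ℝ, 0 < C ∧ ∀ a b₁ b₂ : ℝ, 0 ≤ a → a ≤ 1 →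
      |(|a + b₁| ^ p - |a + b₂| ^ p - p * a ^ (p - 1) * (b₁ - b₂))| ≤
        C * (|b₁| + |b₂| + |b₁| ^ (p - 1) + |b₂| ^ (p - 1)) * |b₁ - b₂|) := by
  refine ⟨fun p hp hp₂ => ⟨p * 2, by linarith, fun a b₁ b₂ ha₀ _ => ?_⟩,
    fun p hp => ⟨p * ((p - 1) * 2 ^ (p - 1 - 1)),
      mul_pos (by linarith) (mul_pos (by linarith) (by positivity)), fun a b₁ b₂ ha₀ ha₁ => ?_⟩⟩
  · refine (abs_abs_add_rpow_sub_sub_le (K := 2 * (|b₁| ^ (p - 1) + |b₂| ^ (p - 1)))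
      (by linarith) fun x hx => ?_).trans_eq (by ring)
    calc _ ≤ 2 * |x| ^ (p - 1) :=
          abs_signedRpow_add_sub_rpow_le_of_le_one (by linarith) (by linarith) ha₀ x
      _ ≤ _ := by gcongr; exact abs_rpow_le_of_mem_uIcc (by linarith) hx
  · refine (abs_abs_add_rpow_sub_sub_le (K := (p - 1) * 2 ^ (p - 1 - 1) *
      (|b₁| + |b₂| + |b₁| ^ (p - 1) + |b₂| ^ (p - 1))) (by linarith) fun x hx => ?_).trans_eq
      (by ring)
    have h₁ := abs_rpow_le_of_mem_uIcc zero_le_one hx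
    have h₂ := abs_rpow_le_of_mem_uIcc (by linarith : (0 : ℝ) ≤ p - 1) hx
    simp only [rpow_one] at h₁
    calc _ ≤ (p - 1) * 2 ^ (p - 1 - 1) * (|x| + |x| ^ (p - 1)) :=
          abs_signedRpow_add_sub_rpow_le_of_one_lt (by linarith) ha₀ ha₁ x
      _ ≤ _ := mul_le_mul_of_nonneg_left (by linarith) (mul_nonneg (by linarith) (by positivity))
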